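/- For every integer m ≥ 1, the Davenport–Heilbronn completed functions have the explicit odd-integer values ξ_±(2m+1) = ∓ (2·(−1)^m/(2m+1)!!)·[ B_{2m+1}(1/5) + τ_±·B_{2m+1}(2/5) ]·√π·(10π)^m, where B_k(·) is the k-th Bernoulli polynomial and (2m+1)!! = 1·3·5···(2m+1). -/

import Mathlib

open Complex HurwitzZeta

/-- The golden ratio `φ = (1+√5)/2`. -/
noncomputable def goldenPhi : ℝ := (1 + Real.sqrt 5) / 2

/-- `τ₊ := -φ + √(1+φ²)`. -/
noncomputable def tauPlus : ℝ := -goldenPhi + Real.sqrt (1 + goldenPhi ^ 2)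

/-- `τ₋ := -φ - √(1+φ²)`. -/
noncomputable def tauMinus : ℝ := -goldenPhi - Real.sqrt (1 + goldenPhi ^ 2)

/-- The Davenport–Heilbronn function with parameter `τ`:
`f_τ(x) := 5^(-x)·[ζ(x,1/5) + τ·(ζ(x,2/5) - ζ(x,3/5)) - ζ(x,4/5)]`,
where `ζ(x,a)` is the Hurwitz zeta function. -/
noncomputable def fDH (τ : ℝ) (x : ℂ) : ℂ :=
  (5 : ℂ) ^ (-x) * (hurwitzZeta ((1 / 5 : ℝ) : UnitAddCircle) x +
    (τ : ℂ) * (hurwitzZeta ((2 / 5 : ℝ) : UnitAddCircle) x -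
      hurwitzZeta ((3 / 5 : ℝ) : UnitAddCircle) x) -
    hurwitzZeta ((4 / 5 : ℝ) : UnitAddCircle) x)

/-- The completed Davenport–Heilbronn function
`ξ_τ(x) := (π/5)^(-x/2)·Γ((1+x)/2)·f_τ(x)`. -/
noncomputable def xiDH (τ : ℝ) (x : ℂ) : ℂ :=
  ((Real.pi / 5 : ℝ) : ℂ) ^ (-x / 2) * Complex.Gamma ((1 + x) / 2) * fDH τ x

/-- The right-hand side `(2·(-1)^m/(2m+1)!!)·[B_{2m+1}(1/5) + τ·B_{2m+1}(2/5)]·√π·(10π)^m`,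
where `B_k(·)` is the `k`-th Bernoulli polynomial and `(2m+1)!!` the double factorial. -/
noncomputable def dhOddValue (τ : ℝ) (m : ℕ) : ℝ :=
  2 * (-1 : ℝ) ^ m / (Nat.doubleFactorial (2 * m + 1) : ℝ) *
    (Polynomial.aeval (1 / 5 : ℝ) (Polynomial.bernoulli (2 * m + 1)) +
      τ * Polynomial.aeval (2 / 5 : ℝ) (Polynomial.bernoulli (2 * m + 1))) *
    Real.sqrt Real.pi * (10 * Real.pi) ^ m

/-! With the odd weights `Φ_τ = (0, 1, τ, -τ, -1)` on `ℤ/5`, `f_τ` is the `L`-function of `Φ_τ`.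
For the two roots `τ = τ_±` of `(φ + τ)² = 1 + φ²`, `Φ_τ` is an eigenvector of the discrete
Fourier transform on `ℤ/5`, with eigenvalue `-2i·sin(π/5)·(φ + τ) = ∓i√5`. The `L`-function of
the Fourier transform of an odd `Φ` is a combination of the sine zeta functions `sinZeta (j/5)`,
so `f_± = ±(2/√5)·(sinZeta (1/5) + τ_±·sinZeta (2/5))`; at `s = 2m+1` these are Bernoulli
polynomial values, and the rest is the arithmetic of `Γ(m+1) = m!`, `(π/5)^(-(2m+1)/2)` and
`(2m+1)! = (2m+1)!!·2^m·m!`. -/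

open Real ZMod
open scoped Nat

namespace ZMod

lemma toAddCircle_one {N : ℕ} [NeZero N] :
    toAddCircle (1 : ZMod N) = ((1 / N : ℝ) : UnitAddCircle) := by
  simpa using toAddCircle_natCast (N := N) 1

lemma toAddCircle_ofNat {N : ℕ} [NeZero N] (n : ℕ) [n.AtLeastTwo] :
    toAddCircle (OfNat.ofNat n : ZMod N) = ((OfNat.ofNat n / N : ℝ) : UnitAddCircle) := by
  simpa only [Nat.cast_ofNat] using toAddCircle_natCast (N := N) (OfNat.ofNat n)

lemma stdAddChar_neg_sub_stdAddChar {N : ℕ} [NeZero N] (n : ℤ) :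
    stdAddChar (-(n : ZMod N)) - stdAddChar (n : ZMod N) =
      -2 * I * Real.sin (2 * π * n / N) := by
  rw [← Int.cast_neg, stdAddChar_coe, stdAddChar_coe, ofReal_sin, Complex.sin]
  push_cast
  ring_nf
  rw [I_sq]
  ring_nf

lemma LFunction_smul {N : ℕ} [NeZero N] (c : ℂ) (Φ : ZMod N → ℂ) (s : ℂ) :
    LFunction (c • Φ) s = c * LFunction Φ s := by
  simp only [LFunction, Pi.smul_apply, smul_eq_mul, Finset.mul_sum]
  ring_nf

lemma funext_of_odd_five {f g : ZMod 5 → ℂ} (hf : f.Odd) (hg : g.Odd)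
    (h₁ : f 1 = g 1) (h₂ : f 2 = g 2) : f = g := by
  funext k
  fin_cases k
  · exact hf.map_zero.trans hg.map_zero.symm
  · exact h₁
  · exact h₂
  · change f (-2) = g (-2)
    rw [hf, hg, h₂]
  · change f (-1) = g (-1)
    rw [hf, hg, h₁]

end ZMod

lemma HurwitzZeta.expZeta_neg_sub_expZeta (a : UnitAddCircle) (s : ℂ) :
    expZeta (-a) s - expZeta a s = -2 * I * sinZeta a s := by
  simp only [expZeta, cosZeta_neg, sinZeta_neg]
  ring

lemma HurwitzZeta.sinZeta_two_mul_nat_add_one_eq_ofReal {k : ℕ} (hk : k ≠ 0) {x : ℝ}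
    (hx : x ∈ Set.Icc 0 1) :
    sinZeta x (2 * k + 1) = ((-1 : ℝ) ^ (k + 1) * (2 * π) ^ (2 * k + 1) / 2 /
      (2 * k + 1).factorial * Polynomial.aeval x (Polynomial.bernoulli (2 * k + 1)) : ℝ) := by
  rw [sinZeta_two_mul_nat_add_one hk hx, Polynomial.eval_map_algebraMap,
    ← Complex.coe_algebraMap, Polynomial.aeval_algebraMap_apply]
  push_cast
  rfl

lemma Nat.factorial_two_mul_add_one (m : ℕ) :
    (2 * m + 1)! = (2 * m + 1)‼ * (2 ^ m * m !) := by
  rw [← Nat.doubleFactorial_two_mul]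
  exact Nat.factorial_eq_mul_doubleFactorial (2 * m)

lemma sin_two_pi_div_five : Real.sin (2 * π / 5) = goldenPhi * Real.sin (π / 5) := by
  rw [mul_div_assoc, Real.sin_two_mul, Real.cos_pi_div_five, goldenPhi]
  ring

lemma sin_four_pi_div_five : Real.sin (4 * π / 5) = Real.sin (π / 5) := by
  rw [← Real.sin_pi_sub]
  ring_nf

lemma two_mul_sin_pi_div_five_mul_sqrt :
    2 * Real.sin (π / 5) * √(1 + goldenPhi ^ 2) = √5 := by
  have hsin : 0 ≤ Real.sin (π / 5) :=
    Real.sin_nonneg_of_nonneg_of_le_pi (by positivity) (by linarith [pi_pos])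
  rw [← Real.sqrt_sq (by positivity : 0 ≤ 2 * Real.sin (π / 5) * √(1 + goldenPhi ^ 2)),
    mul_pow, mul_pow, Real.sq_sqrt (by positivity), Real.sin_sq, Real.cos_pi_div_five, goldenPhi]
  congr 1
  linear_combination (1 / 16 - √5 / 4 - √5 ^ 2 / 16) * Real.sq_sqrt (show (0 : ℝ) ≤ 5 by norm_num)

lemma pi_div_five_cpow (m : ℕ) :
    ((π / 5 : ℝ) : ℂ) ^ (-(2 * m + 1 : ℂ) / 2) = ((√5 / √π) ^ (2 * m + 1) : ℝ) := by
  rw [show -(2 * m + 1 : ℂ) / 2 = ((-(1 / 2) * (2 * m + 1 : ℕ) : ℝ) : ℂ) by push_cast; ring,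
    ← ofReal_cpow (by positivity), Real.rpow_mul_natCast (by positivity),
    Real.rpow_neg (by positivity), ← Real.sqrt_eq_rpow, Real.sqrt_div' _ (by norm_num), inv_div]

noncomputable def dhWeight (τ : ℝ) : ZMod 5 → ℂ := ![0, 1, τ, -τ, -1]

lemma sum_dhWeight_mul (τ : ℝ) (g : ZMod 5 → ℂ) :
    ∑ j, dhWeight τ j * g j = g 1 - g 4 + τ * (g 2 - g 3) := by
  refine (Fin.sum_univ_five _).trans ?_
  -- restate the `Fin 5` numerals produced by `Fin.sum_univ_five` as `ZMod 5` numerals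
  change 0 * g 0 + 1 * g 1 + τ * g 2 + -τ * g 3 + -1 * g 4 = _
  ring

lemma dhWeight_odd (τ : ℝ) : (dhWeight τ).Odd := by
  intro j
  fin_cases j
  · exact neg_zero.symm
  all_goals simp [dhWeight]

lemma fDH_eq_LFunction (τ : ℝ) (s : ℂ) : fDH τ s = LFunction (dhWeight τ) s := by
  rw [LFunction, sum_dhWeight_mul, toAddCircle_one, toAddCircle_ofNat 2, toAddCircle_ofNat 3,
    toAddCircle_ofNat 4, fDH]
  push_cast
  ring

theorem dft_dhWeight {τ : ℝ} (hτ : (goldenPhi + τ) ^ 2 = 1 + goldenPhi ^ 2) :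
    𝓕 (dhWeight τ) = (-2 * I * (Real.sin (π / 5) * (goldenPhi + τ) : ℝ)) • dhWeight τ := by
  refine funext_of_odd_five (dft_odd_iff.mpr (dhWeight_odd τ))
    ((dhWeight_odd τ).const_smul _) ?_ ?_
  all_goals
    simp only [dft_apply, smul_eq_mul, mul_comm (stdAddChar _), Pi.smul_apply]
    rw [sum_dhWeight_mul]
  · rw [show (-(1 * 1) : ZMod 5) = -((1 : ℤ) : ZMod 5) by decide,
      show (-(4 * 1) : ZMod 5) = ((1 : ℤ) : ZMod 5) by decide,
      show (-(2 * 1) : ZMod 5) = -((2 : ℤ) : ZMod 5) by decide,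
      show (-(3 * 1) : ZMod 5) = ((2 : ℤ) : ZMod 5) by decide,
      stdAddChar_neg_sub_stdAddChar, stdAddChar_neg_sub_stdAddChar,
      show dhWeight τ 1 = 1 from rfl]
    simp only [Int.cast_one, Int.cast_ofNat, Nat.cast_ofNat, mul_one]
    rw [show 2 * π * 2 / 5 = 4 * π / 5 by ring, sin_four_pi_div_five, sin_two_pi_div_five]
    push_cast
    ring
  · rw [show (-(1 * 2) : ZMod 5) = -((2 : ℤ) : ZMod 5) by decide,
      show (-(4 * 2) : ZMod 5) = ((2 : ℤ) : ZMod 5) by decide,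
      show (-(2 * 2) : ZMod 5) = ((1 : ℤ) : ZMod 5) by decide,
      show (-(3 * 2) : ZMod 5) = -((1 : ℤ) : ZMod 5) by decide,
      ← neg_sub (stdAddChar (-((1 : ℤ) : ZMod 5))), stdAddChar_neg_sub_stdAddChar,
      stdAddChar_neg_sub_stdAddChar, show dhWeight τ 2 = τ from rfl]
    simp only [Int.cast_one, Int.cast_ofNat, Nat.cast_ofNat, mul_one]
    rw [show 2 * π * 2 / 5 = 4 * π / 5 by ring, sin_four_pi_div_five, sin_two_pi_div_five]
    push_cast
    linear_combination (2 * I * Complex.sin (π / 5)) *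
      (by exact_mod_cast hτ : ((goldenPhi : ℂ) + τ) ^ 2 = 1 + (goldenPhi : ℂ) ^ 2)

lemma sum_dhWeight_mul_expZeta_neg (τ : ℝ) (s : ℂ) :
    ∑ j, dhWeight τ j * expZeta (toAddCircle (-j)) s =
      -2 * I * (sinZeta ((1 / 5 : ℝ) : UnitAddCircle) s +
        τ * sinZeta ((2 / 5 : ℝ) : UnitAddCircle) s) := by
  rw [sum_dhWeight_mul, show (-4 : ZMod 5) = 1 by decide, show (-3 : ZMod 5) = 2 by decide,
    map_neg, map_neg, expZeta_neg_sub_expZeta, expZeta_neg_sub_expZeta, toAddCircle_one,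
    toAddCircle_ofNat 2]
  push_cast
  ring

theorem sin_mul_fDH {τ : ℝ} (hτ : (goldenPhi + τ) ^ 2 = 1 + goldenPhi ^ 2) (s : ℂ) :
    (Real.sin (π / 5) * (goldenPhi + τ) : ℝ) * fDH τ s =
      sinZeta ((1 / 5 : ℝ) : UnitAddCircle) s + τ * sinZeta ((2 / 5 : ℝ) : UnitAddCircle) s := by
  have h := LFunction_dft (dhWeight τ) (s := s) (Or.inl rfl)
  rw [dft_dhWeight hτ, LFunction_smul, sum_dhWeight_mul_expZeta_neg, ← fDH_eq_LFunction] at h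
  refine mul_left_cancel₀ (by simp : (-2 * I : ℂ) ≠ 0) ?_
  rw [← mul_assoc, h]

theorem fDH_eq_sinZeta {τ ε : ℝ} (hε : ε ^ 2 = 1)
    (hτ : goldenPhi + τ = ε * √(1 + goldenPhi ^ 2)) (s : ℂ) :
    fDH τ s = (2 * ε / √5 : ℝ) *
      (sinZeta ((1 / 5 : ℝ) : UnitAddCircle) s + τ * sinZeta ((2 / 5 : ℝ) : UnitAddCircle) s) := by
  have hsin : Real.sin (π / 5) * (goldenPhi + τ) = ε * √5 / 2 := by
    rw [hτ, ← two_mul_sin_pi_div_five_mul_sqrt]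
    ring
  have hτ' : (goldenPhi + τ) ^ 2 = 1 + goldenPhi ^ 2 := by
    rw [hτ, mul_pow, hε, one_mul, Real.sq_sqrt (by positivity)]
  have hinv : 2 * ε / √5 * (ε * √5 / 2) = 1 := by
    field_simp
    linear_combination hε
  rw [← sin_mul_fDH hτ', hsin, ← mul_assoc, ← ofReal_mul, hinv, ofReal_one, one_mul]

theorem xiDH_two_mul_add_one {τ ε : ℝ} (hε : ε ^ 2 = 1)
    (hτ : goldenPhi + τ = ε * √(1 + goldenPhi ^ 2)) {m : ℕ} (hm : m ≠ 0) :
    xiDH τ (2 * m + 1) = -((ε * dhOddValue τ m : ℝ) : ℂ) := by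
  have hΓ : Complex.Gamma ((1 + (2 * m + 1)) / 2) = m ! := by
    rw [show (1 + (2 * m + 1)) / 2 = (m : ℂ) + 1 by ring, Complex.Gamma_nat_eq_factorial]
  rw [xiDH, fDH_eq_sinZeta hε hτ, hΓ, pi_div_five_cpow,
    sinZeta_two_mul_nat_add_one_eq_ofReal hm (by norm_num),
    sinZeta_two_mul_nat_add_one_eq_ofReal hm (by norm_num)]
  norm_cast
  push_cast
  rw [dhOddValue, Nat.factorial_two_mul_add_one, pow_succ, pow_mul, div_pow,
    Real.sq_sqrt (by norm_num), Real.sq_sqrt pi_pos.le, pow_succ (2 * π), pow_mul,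
    show (10 : ℝ) * π = 2 * 5 * π by norm_num]
  simp only [div_pow, mul_pow, ← pow_mul]
  field_simp
  rw [Real.sq_sqrt pi_pos.le]
  push_cast
  ring

/-- For every integer `m ≥ 1`,
`ξ_±(2m+1) = ∓(2·(-1)^m/(2m+1)!!)·[B_{2m+1}(1/5) + τ_±·B_{2m+1}(2/5)]·√π·(10π)^m`. -/
theorem stmt_18 (m : ℕ) (hm : 1 ≤ m) :
    xiDH tauPlus (2 * m + 1) = -((dhOddValue tauPlus m : ℝ) : ℂ) ∧
    xiDH tauMinus (2 * m + 1) = ((dhOddValue tauMinus m : ℝ) : ℂ) := by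
  have hm₀ : m ≠ 0 := Nat.one_le_iff_ne_zero.mp hm
  constructor
  · simpa using xiDH_two_mul_add_one (ε := 1) (by norm_num) (by rw [tauPlus]; ring) hm₀
  · simpa using xiDH_two_mul_add_one (ε := -1) (by norm_num) (by rw [tauMinus]; ring) hm₀
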